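/- arXiv:2304.02685 — 6 statements merged into one kernel-verified Lean document; each statement's English description precedes it below -/
import Mathlib

section
/- Let A be an element of a unital C*-algebra 𝔄 and λ ∈ ℂ. There exists a state ω on 𝔄 that is an eigenstate of A with eigenvalue λ if and only if the unit 1 does not belong to the norm-closure in 𝔄 of the set {B(A − λ·1) : B ∈ 𝔄}. -/
variable {𝔄 : Type*} [CStarAlgebra 𝔄]

/-- A state on a unital C*-algebra `𝔄`: a continuous linear functional `ω : 𝔄 → ℂ`
which is normalized (`ω 1 = 1`) and positive (`ω (a* a)` is a nonnegative real number). -/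
def IsState (ω : 𝔄 → ℂ) : Prop :=
  Continuous ω ∧ IsLinearMap ℂ ω ∧ ω 1 = 1 ∧
    ∀ a : 𝔄, ∃ r : ℝ, 0 ≤ r ∧ ω (star a * a) = (r : ℂ)

/-- `ω` is an eigenstate of `A` with eigenvalue `l` if `ω (B * A) = l * ω B` for all `B`. -/
def IsEigenstate (ω : 𝔄 → ℂ) (A : 𝔄) (l : ℂ) : Prop :=
  ∀ B : 𝔄, ω (B * A) = l * ω B

/-! The left ideal `I` generated by `A - l • 1` is annihilated by every eigenstate, which keeps
`1` out of its closure. Conversely, if the closure of `I` is proper, then `1` has distance at least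
`1` from it (elements within `1` of the unit are invertible), so Hahn–Banach gives a functional of
norm at most `1` vanishing on `I` with value `1` at `1`. In a C*-algebra such a functional is
positive, hence a state, and vanishing on `I` says exactly that it is an eigenstate. -/

open Metric ComplexOrder

theorem Submodule.exists_dual_apply_eq_infDist {𝕜 E : Type*} [RCLike 𝕜]
    [SeminormedAddCommGroup E] [NormedSpace 𝕜 E] (p : Submodule 𝕜 E) (x : E) :
    ∃ g : StrongDual 𝕜 E, ‖g‖ ≤ 1 ∧ g x = infDist x p ∧ ∀ y ∈ p, g y = 0 := by
  obtain ⟨g, hg, hgx⟩ := exists_dual_vector'' 𝕜 (p.mkQ x)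
  let π : E →L[𝕜] E ⧸ p := p.mkQ.mkContinuous 1 fun y => by
    simpa using Submodule.Quotient.norm_mk_le p y
  refine ⟨g.comp π, ?_, ?_, fun y hy => ?_⟩
  · calc ‖g.comp π‖ ≤ ‖g‖ * ‖π‖ := g.opNorm_comp_le π
      _ ≤ 1 * 1 := by gcongr; exact LinearMap.mkContinuous_norm_le _ zero_le_one _
      _ = 1 := one_mul 1
  · exact hgx.trans (congrArg _ (QuotientAddGroup.norm_mk (S := p.toAddSubgroup) x))
  · simp [π, (Submodule.Quotient.mk_eq_zero p).2 hy]

theorem Ideal.one_le_infDist_one {R : Type*} [NormedRing R] [HasSummableGeomSeries R]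
    {I : Ideal R} (hI : I ≠ ⊤) : 1 ≤ infDist 1 (I : Set R) :=
  (le_infDist ⟨0, I.zero_mem⟩).2 fun x hx => by
    rw [dist_eq_norm]
    exact not_lt.1 fun h => hI (I.eq_top_of_norm_lt_one hx h)

theorem Ideal.exists_dual_apply_one_eq_one {𝕜 R : Type*} [RCLike 𝕜] [NormedRing R]
    [NormedAlgebra 𝕜 R] [HasSummableGeomSeries R] {I : Ideal R} (hI : I ≠ ⊤) :
    ∃ f : StrongDual 𝕜 R, ‖f‖ ≤ 1 ∧ f 1 = 1 ∧ ∀ x ∈ I, f x = 0 := by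
  obtain ⟨g, hg, hg1, hgI⟩ := (I.restrictScalars 𝕜).exists_dual_apply_eq_infDist 1
  rw [Submodule.coe_restrictScalars] at hg1
  have hd : 1 ≤ infDist (1 : R) I := I.one_le_infDist_one hI
  refine ⟨((infDist (1 : R) I)⁻¹ : 𝕜) • g, ?_, ?_, fun x hx => by simp [hgI x hx]⟩
  · rw [norm_smul, norm_inv, RCLike.norm_ofReal, abs_of_pos (by linarith)]
    exact inv_mul_le_one_of_le₀ (hg.trans hd) (by linarith)
  · rw [smul_apply, hg1, smul_eq_mul, inv_mul_cancel₀]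
    exact RCLike.ofReal_ne_zero.2 (by linarith)

theorem eq_zero_of_forall_add_sq_le {y c : ℝ} (h : ∀ t : ℝ, (y + t) ^ 2 ≤ c + t ^ 2) : y = 0 := by
  by_contra hy
  have ht : 2 * y * ((c + 1) / (2 * y)) = c + 1 := by field_simp
  nlinarith [h ((c + 1) / (2 * y)), sq_nonneg y]

theorem IsSelfAdjoint.norm_add_I_smul_one_sq_le {b : 𝔄} (hb : IsSelfAdjoint b) (t : ℝ) :
    ‖b + (t * Complex.I) • (1 : 𝔄)‖ ^ 2 ≤ ‖b‖ ^ 2 + t ^ 2 := by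
  have hstar : star (b + (t * Complex.I) • (1 : 𝔄)) * (b + (t * Complex.I) • 1)
      = b * b + ((t : ℂ) ^ 2) • 1 := by
    have : star (b + (t * Complex.I) • (1 : 𝔄)) = b - (t * Complex.I) • 1 := by
      simp [star_smul, hb.star_eq, sub_eq_add_neg, ← neg_smul]
    rw [this]
    simp only [mul_add, sub_mul, smul_mul_assoc, mul_smul_comm, one_mul, mul_one]
    match_scalars
    · ring
    · ring
    · linear_combination (-(t : ℂ) ^ 2) * Complex.I_sq
  calc ‖b + (t * Complex.I) • (1 : 𝔄)‖ ^ 2 = ‖b * b + ((t : ℂ) ^ 2) • 1‖ := by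
        rw [sq, ← CStarRing.norm_star_mul_self, hstar]
    _ ≤ ‖b * b‖ + ‖((t : ℂ) ^ 2) • (1 : 𝔄)‖ := norm_add_le _ _
    _ ≤ ‖b‖ ^ 2 + t ^ 2 := by
        gcongr
        · exact (norm_mul_le b b).trans_eq (sq ‖b‖).symm
        · have : ‖(1 : 𝔄)‖ ≤ 1 := by nontriviality 𝔄; simp
          exact (norm_smul_le _ _).trans
            (by simpa [← Complex.ofReal_pow] using mul_le_of_le_one_right (sq_nonneg t) this)

theorem ContinuousLinearMap.im_apply_eq_zero_of_isSelfAdjoint {f : StrongDual ℂ 𝔄}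
    (hf : ‖f‖ ≤ 1) (hf1 : f 1 = 1) {b : 𝔄} (hb : IsSelfAdjoint b) : (f b).im = 0 := by
  refine eq_zero_of_forall_add_sq_le (c := ‖b‖ ^ 2) fun t => ?_
  set c := b + (t * Complex.I) • (1 : 𝔄)
  calc ((f b).im + t) ^ 2 = |(f c).im| ^ 2 := by simp [c, hf1]
    _ ≤ ‖f c‖ ^ 2 := by gcongr; exact Complex.abs_im_le_norm _
    _ ≤ ‖c‖ ^ 2 := by gcongr; simpa using f.le_of_opNorm_le hf c
    _ ≤ ‖b‖ ^ 2 + t ^ 2 := hb.norm_add_I_smul_one_sq_le t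

theorem norm_algebraMap_norm_sub_le_norm [PartialOrder 𝔄] [StarOrderedRing 𝔄] {b : 𝔄}
    (hb : 0 ≤ b) : ‖algebraMap ℝ 𝔄 ‖b‖ - b‖ ≤ ‖b‖ := by
  rw [CStarAlgebra.norm_le_iff_le_algebraMap _ (norm_nonneg b)
    (sub_nonneg.2 hb.isSelfAdjoint.le_algebraMap_norm_self)]
  exact sub_le_self _ hb

theorem ContinuousLinearMap.re_apply_nonneg_of_nonneg [PartialOrder 𝔄] [StarOrderedRing 𝔄]
    {f : StrongDual ℂ 𝔄} (hf : ‖f‖ ≤ 1) (hf1 : f 1 = 1) {b : 𝔄} (hb : 0 ≤ b) :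
    0 ≤ (f b).re := by
  have h : ‖(‖b‖ : ℂ) - f b‖ ≤ ‖b‖ := by
    have := (f.le_of_opNorm_le hf (algebraMap ℝ 𝔄 ‖b‖ - b)).trans_eq (one_mul _)
    simpa [Algebra.algebraMap_eq_smul_one, map_smul_of_tower, hf1] using
      this.trans (norm_algebraMap_norm_sub_le_norm hb)
  have := (abs_le.1 ((Complex.abs_re_le_norm _).trans h)).2
  simp only [Complex.sub_re, Complex.ofReal_re] at this
  linarith

theorem ContinuousLinearMap.apply_nonneg_of_nonneg [PartialOrder 𝔄] [StarOrderedRing 𝔄]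
    {f : StrongDual ℂ 𝔄} (hf : ‖f‖ ≤ 1) (hf1 : f 1 = 1) {b : 𝔄} (hb : 0 ≤ b) : 0 ≤ f b :=
  Complex.nonneg_iff.2
    ⟨f.re_apply_nonneg_of_nonneg hf hf1 hb,
      (f.im_apply_eq_zero_of_isSelfAdjoint hf hf1 hb.isSelfAdjoint).symm⟩

theorem isState_of_norm_le_one {f : StrongDual ℂ 𝔄} (hf : ‖f‖ ≤ 1) (hf1 : f 1 = 1) :
    IsState f := by
  let := CStarAlgebra.spectralOrder 𝔄
  have := CStarAlgebra.spectralOrderedRing 𝔄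
  refine ⟨f.continuous, f.toLinearMap.isLinear, hf1, fun a => ?_⟩
  obtain ⟨r, hr, h⟩ :=
    RCLike.nonneg_iff_exists_ofReal.1 (f.apply_nonneg_of_nonneg hf hf1 (star_mul_self_nonneg a))
  exact ⟨r, hr, h.symm⟩

theorem setOf_exists_eq_mul_eq_span {R : Type*} [Semiring R] (a : R) :
    {x : R | ∃ B, x = B * a} = (Ideal.span {a} : Set R) := by
  ext x
  simp [Ideal.mem_span_singleton', eq_comm]

theorem isEigenstate_iff_forall_mem_span {ω : 𝔄 → ℂ} (hω : IsLinearMap ℂ ω) (A : 𝔄) (l : ℂ) :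
    IsEigenstate ω A l ↔ ∀ x ∈ Ideal.span {A - l • (1 : 𝔄)}, ω x = 0 := by
  simp only [Ideal.mem_span_singleton', forall_exists_index, forall_apply_eq_imp_iff]
  refine forall_congr' fun B => ?_
  rw [mul_sub, mul_smul_comm, mul_one, hω.map_sub, hω.map_smul, smul_eq_mul, sub_eq_zero]

/-- There exists an eigenstate of `A` with eigenvalue `l` iff the unit does not belong
to the norm-closure of `{B (A - l•1) : B ∈ 𝔄}`. -/
theorem exists_eigenstate_iff_one_not_mem_closure (A : 𝔄) (l : ℂ) :
    (∃ ω : 𝔄 → ℂ, IsState ω ∧ IsEigenstate ω A l) ↔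
      (1 : 𝔄) ∉ closure {x : 𝔄 | ∃ B : 𝔄, x = B * (A - l • (1 : 𝔄))} := by
  rw [setOf_exists_eq_mul_eq_span, ← Ideal.coe_closure, SetLike.mem_coe, ← Ideal.eq_top_iff_one]
  set I := Ideal.span {A - l • (1 : 𝔄)}
  constructor
  · rintro ⟨ω, ⟨hω, hlin, hω1, -⟩, heig⟩ htop
    have hker : (I.closure : Set 𝔄) ⊆ ω ⁻¹' {0} :=
      closure_minimal ((isEigenstate_iff_forall_mem_span hlin A l).1 heig)
        (isClosed_singleton.preimage hω)
    have hω0 : ω 1 = 0 := hker (by rw [htop]; exact Submodule.mem_top)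
    exact one_ne_zero (hω1.symm.trans hω0)
  · intro hI
    obtain ⟨f, hf, hf1, hfI⟩ := Ideal.exists_dual_apply_one_eq_one (𝕜 := ℂ) hI
    exact ⟨f, isState_of_norm_le_one hf hf1, (isEigenstate_iff_forall_mem_span
      f.toLinearMap.isLinear A l).2 fun x hx => hfI x (subset_closure hx)⟩
end

section
/- Let A be an element of a unital C*-algebra 𝔄 and λ ∈ ℂ. There exists a state ω on 𝔄 that is an eigenstate of A with eigenvalue λ if and only if A − λ·1 is not left-invertible in 𝔄, i.e., there exists no B ∈ 𝔄 with B(A − λ·1) = 1. -/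
/-!
If `C = A - l • 1` has a left inverse `B`, an eigenstate `ω` would give `1 = ω (B * C) = 0`.
Conversely, if `C` has no left inverse then `star C * C` is not invertible, so some character of
the commutative C⋆-algebra generated by `star C * C` vanishes on it. A norm-preserving
Hahn–Banach extension `ω` of this character satisfies `‖ω‖ = ω 1 = 1`, which forces `ω` to be
positive, i.e. a state. Cauchy–Schwarz for the semi-inner product `ω (star x * y)` then turns
`ω (star C * C) = 0` into `ω (B * C) = 0` for every `B`, which is the eigenvalue equation.
-/

variable {𝔄 : Type*} [CStarAlgebra 𝔄]

open Complex ComplexOrder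

section CStarRing

variable {E : Type*} [NormedRing E] [StarRing E] [CStarRing E] [NormedAlgebra ℂ E]
  [StarModule ℂ E] [Nontrivial E]

lemma IsSelfAdjoint.norm_add_I_smul_one_sq_le_s5 {h : E} (hh : IsSelfAdjoint h) (t : ℝ) :
    ‖h + (t * I) • (1 : E)‖ ^ 2 ≤ ‖h‖ ^ 2 + t ^ 2 := by
  have hstar : star (h + (t * I) • (1 : E)) * (h + (t * I) • 1) = h * h + (t ^ 2 : ℂ) • 1 := by
    have hconj : star ((t : ℂ) * I) = -(t * I) := by simp [conj_ofReal]
    have hsq : (t : ℂ) * I * -(t * I) = t ^ 2 := by ring_nf; simp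
    rw [star_add, star_smul, hh.star_eq, star_one, hconj]
    simp only [add_mul, mul_add, smul_add, smul_mul_assoc, mul_smul_comm, one_mul, mul_one,
      smul_smul]
    rw [hsq, neg_smul]
    abel
  calc ‖h + (t * I) • (1 : E)‖ ^ 2 = ‖h * h + (t ^ 2 : ℂ) • (1 : E)‖ := by
        rw [← hstar, CStarRing.norm_star_mul_self, sq]
    _ ≤ ‖h * h‖ + ‖(t ^ 2 : ℂ) • (1 : E)‖ := norm_add_le _ _
    _ = ‖h‖ ^ 2 + t ^ 2 := by
        rw [hh.norm_mul_self, norm_smul, norm_one, mul_one, sq ‖h‖]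
        norm_cast
        simp [sq_abs]

lemma ContinuousLinearMap.im_apply_eq_zero_of_isSelfAdjoint_s5 {g : E →L[ℂ] ℂ} (hg : ‖g‖ ≤ 1)
    (hg1 : g 1 = 1) {h : E} (hh : IsSelfAdjoint h) : (g h).im = 0 := by
  have key (t : ℝ) : (g h).re ^ 2 + ((g h).im + t) ^ 2 ≤ ‖h‖ ^ 2 + t ^ 2 :=
    calc (g h).re ^ 2 + ((g h).im + t) ^ 2 = ‖g (h + (t * I) • (1 : E))‖ ^ 2 := by
          rw [map_add, map_smul, hg1, smul_eq_mul, mul_one, Complex.sq_norm, normSq_apply]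
          simp only [add_re, add_im, mul_re, mul_im, ofReal_re, ofReal_im, I_re, I_im]
          ring
      _ ≤ ‖h + (t * I) • (1 : E)‖ ^ 2 := by
          gcongr
          exact (g.le_of_opNorm_le hg _).trans_eq (one_mul _)
      _ ≤ ‖h‖ ^ 2 + t ^ 2 := hh.norm_add_I_smul_one_sq_le_s5 t
  by_contra him
  -- after cancelling `t ^ 2`, `key` bounds `t ↦ 2 * t * (g h).im` from above on all of `ℝ`
  have hk := key ((‖h‖ ^ 2 + 1) / (2 * (g h).im))
  have ht : 2 * (g h).im * ((‖h‖ ^ 2 + 1) / (2 * (g h).im)) = ‖h‖ ^ 2 + 1 := by field_simp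
  nlinarith [sq_nonneg (g h).re, sq_nonneg (g h).im]

end CStarRing

section StarOrderedRing

variable [PartialOrder 𝔄] [StarOrderedRing 𝔄]

lemma ContinuousLinearMap.apply_nonneg_of_nonneg_s5 [Nontrivial 𝔄] {g : 𝔄 →L[ℂ] ℂ} (hg : ‖g‖ ≤ 1)
    (hg1 : g 1 = 1) {a : 𝔄} (ha : 0 ≤ a) : 0 ≤ g a := by
  have hdist : ‖(‖a‖ : ℂ) - g a‖ ≤ ‖a‖ :=
    calc ‖(‖a‖ : ℂ) - g a‖ = ‖g (algebraMap ℝ 𝔄 ‖a‖ - a)‖ := by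
          rw [map_sub, Algebra.algebraMap_eq_smul_one, g.map_smul_of_tower, hg1, real_smul,
            mul_one]
      _ ≤ ‖algebraMap ℝ 𝔄 ‖a‖ - a‖ := (g.le_of_opNorm_le hg _).trans_eq (one_mul _)
      _ ≤ ‖a‖ := by
          rw [CStarAlgebra.norm_le_iff_le_algebraMap _ (norm_nonneg a)
            (sub_nonneg.2 (IsSelfAdjoint.of_nonneg ha).le_algebraMap_norm_self)]
          exact sub_le_self _ ha
  refine nonneg_iff.2 ⟨?_, (im_apply_eq_zero_of_isSelfAdjoint_s5 hg hg1 (.of_nonneg ha)).symm⟩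
  have hre : ((‖a‖ : ℂ) - g a).re = ‖a‖ - (g a).re := by simp
  linarith [re_le_norm ((‖a‖ : ℂ) - g a)]

lemma PositiveLinearMap.apply_star_mul_eq_zero {f : 𝔄 →ₚ[ℂ] ℂ} {v : 𝔄}
    (hv : f (star v * v) = 0) (u : 𝔄) : f (star u * v) = 0 := by
  have hv' : ‖f.toPreGNS v‖ = 0 := by
    have := f.preGNS_norm_sq (f.toPreGNS v)
    rw [ofPreGNS_toPreGNS, hv] at this
    exact_mod_cast (pow_eq_zero_iff two_ne_zero).1 this
  simpa [preGNS_inner_def, hv'] using norm_inner_le_norm (𝕜 := ℂ) (f.toPreGNS u) (f.toPreGNS v)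

end StarOrderedRing

lemma exists_strongDual_apply_eq_zero_of_not_isUnit {a : 𝔄} [IsStarNormal a] (ha : ¬IsUnit a) :
    ∃ g : 𝔄 →L[ℂ] ℂ, ‖g‖ ≤ 1 ∧ g 1 = 1 ∧ g a = 0 := by
  set S := StarAlgebra.elemental ℂ a
  have ha' : ¬IsUnit (⟨a, StarAlgebra.elemental.self_mem ℂ a⟩ : S) :=
    fun h => ha (h.map S.subtype)
  have : Nontrivial S :=
    not_subsingleton_iff_nontrivial.1 fun _ => ha' (isUnit_of_subsingleton _)
  obtain ⟨φ, hφ⟩ := WeakDual.CharacterSpace.exists_apply_eq_zero ha'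
  let χ := WeakDual.CharacterSpace.toAlgHom φ
  obtain ⟨g, hg_ext, hg_norm⟩ :=
    exists_extension_norm_eq S.toSubalgebra.toSubmodule χ.toContinuousLinearMap
  exact ⟨g, hg_norm.trans_le (AlgHom.toContinuousLinearMap_norm χ).le,
    (hg_ext ⟨1, S.one_mem⟩).trans (map_one χ),
    (hg_ext ⟨a, StarAlgebra.elemental.self_mem ℂ a⟩).trans hφ⟩

lemma exists_mul_eq_one_of_isUnit_mul {M : Type*} [Monoid M] {c d : M} (h : IsUnit (d * c)) :
    ∃ b, b * c = 1 :=
  ⟨↑h.unit⁻¹ * d, by rw [mul_assoc, h.val_inv_mul]⟩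

lemma isEigenstate_iff_map_mul_sub_eq_zero {ω : 𝔄 → ℂ} (hω : IsLinearMap ℂ ω) {A : 𝔄} {l : ℂ} :
    IsEigenstate ω A l ↔ ∀ B, ω (B * (A - l • 1)) = 0 := by
  simp only [IsEigenstate, mul_sub, mul_smul_comm, mul_one, hω.map_sub, hω.map_smul, smul_eq_mul,
    sub_eq_zero]

/-- There exists an eigenstate of `A` with eigenvalue `l` iff `A - l•1` is not
left-invertible. -/
theorem exists_eigenstate_iff_not_leftInvertible (A : 𝔄) (l : ℂ) :
    (∃ ω : 𝔄 → ℂ, IsState ω ∧ IsEigenstate ω A l) ↔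
      ¬ ∃ B : 𝔄, B * (A - l • (1 : 𝔄)) = 1 := by
  refine ⟨?_, fun hC => ?_⟩
  · rintro ⟨ω, ⟨-, hlin, hω1, -⟩, hω⟩ ⟨B, hB⟩
    simpa [hB, hω1] using (isEigenstate_iff_map_mul_sub_eq_zero hlin).1 hω B
  set C := A - l • (1 : 𝔄)
  have hCC : ¬IsUnit (star C * C) := fun h => hC (exists_mul_eq_one_of_isUnit_mul h)
  have : Nontrivial 𝔄 :=
    not_subsingleton_iff_nontrivial.1 fun _ => hCC (isUnit_of_subsingleton _)
  have : IsStarNormal (star C * C) := (IsSelfAdjoint.star_mul_self C).isStarNormal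
  obtain ⟨g, hg, hg1, hgC⟩ := exists_strongDual_apply_eq_zero_of_not_isUnit hCC
  let _ := CStarAlgebra.spectralOrder 𝔄
  have := CStarAlgebra.spectralOrderedRing 𝔄
  let f : 𝔄 →ₚ[ℂ] ℂ := .mk₀ g fun _ => ContinuousLinearMap.apply_nonneg_of_nonneg_s5 hg hg1
  have hlin : IsLinearMap ℂ g := g.toLinearMap.isLinear
  refine ⟨g, ⟨g.continuous, hlin, hg1, fun a => ?_⟩,
    (isEigenstate_iff_map_mul_sub_eq_zero hlin).2 fun B => ?_⟩
  · obtain ⟨r, hr, hra⟩ :=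
      RCLike.nonneg_iff_exists_ofReal.1 (f.map_nonneg (star_mul_self_nonneg a))
    exact ⟨r, hr, hra.symm⟩
  · rw [← star_star B]
    exact f.apply_star_mul_eq_zero hgC (star B)
end

section
/- Let A be a normal element (A A* = A* A) of a unital C*-algebra 𝔄 and let f : ℂ → ℂ be continuous on the spectrum of A. If a state ω on 𝔄 is an eigenstate of A with eigenvalue λ ∈ ℂ, then ω is an eigenstate of f(A) (defined via the continuous functional calculus for the normal element A) with eigenvalue f(λ). -/
/-!
For a state `ω`, Cauchy–Schwarz for `(a, b) ↦ ω (a⋆ b)` shows that `ω (B (A - l)) = 0` for all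
`B` as soon as `ω ((A - l)⋆ (A - l)) = 0`, and the converse is trivial. When `A` is normal this
quantity is symmetric in `A - l` and its adjoint, so `ω` is also an eigenstate of `A⋆` with
eigenvalue `conj l`. Eigenstates of a fixed `ω` are stable under sums and products (eigenvalues
add and multiply) and under limits, so by Stone–Weierstrass `ω` is an eigenstate of `g(A)` with
eigenvalue `g(l)` for every continuous `g` on the spectrum.
-/

variable {𝔄 : Type*} [CStarAlgebra 𝔄]

open scoped ComplexOrder

/-- Cauchy–Schwarz for the GNS semi-inner product `⟪a, b⟫ = f (a⋆ b)`. -/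
lemma PositiveLinearMap.apply_mul_eq_zero_of_apply_star_mul_self_eq_zero {A : Type*}
    [NonUnitalCStarAlgebra A] [PartialOrder A] [StarOrderedRing A] (f : A →ₚ[ℂ] ℂ) {n : A}
    (hn : f (star n * n) = 0) (b : A) : f (b * n) = 0 := by
  have := norm_inner_le_norm (𝕜 := ℂ) (f.toPreGNS (star b)) (f.toPreGNS n)
  rw [preGNS_inner_def, preGNS_norm_def f (f.toPreGNS n)] at this
  simpa [hn] using this

instance IsStarNormal.sub_algebraMap {R A : Type*} [CommSemiring R] [StarRing R] [Ring A]
    [StarRing A] [Algebra R A] [StarModule R A] (a : A) [IsStarNormal a] (r : R) :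
    IsStarNormal (a - algebraMap R A r) :=
  have : IsStarNormal (algebraMap R A r) := by
    rw [Algebra.algebraMap_eq_smul_one]; infer_instance
  (algebraMap_star_comm r (A := A) ▸ Algebra.commute_algebraMap_right (star r) a).isStarNormal_sub

variable {ω : 𝔄 → ℂ}

/-- `𝔄` carries no global order; under the spectral order `ω` is a positive linear map. -/
lemma IsState.apply_mul_eq_zero_of_apply_star_mul_self_eq_zero (hω : IsState ω) {n : 𝔄}
    (hn : ω (star n * n) = 0) (b : 𝔄) : ω (b * n) = 0 := by
  let _ := CStarAlgebra.spectralOrder 𝔄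
  have := CStarAlgebra.spectralOrderedRing 𝔄
  let f : 𝔄 →ₚ[ℂ] ℂ := .mk₀ (IsLinearMap.mk' ω hω.2.1) fun x hx ↦ by
    obtain ⟨s, rfl⟩ := CStarAlgebra.nonneg_iff_eq_star_mul_self.mp hx
    obtain ⟨r, hr, hωs⟩ := hω.2.2.2 s
    simpa [hωs] using hr
  exact f.apply_mul_eq_zero_of_apply_star_mul_self_eq_zero hn b

section Eigenstate

variable {A A₁ A₂ : 𝔄} {l l₁ l₂ : ℂ}

lemma isEigenstate_iff_forall_apply_mul_sub_eq_zero (hlin : IsLinearMap ℂ ω) :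
    IsEigenstate ω A l ↔ ∀ B, ω (B * (A - algebraMap ℂ 𝔄 l)) = 0 := by
  refine forall_congr' fun B ↦ ?_
  rw [mul_sub, hlin.map_sub, ← Algebra.commutes, ← Algebra.smul_def, hlin.map_smul,
    smul_eq_mul, sub_eq_zero]

lemma IsState.isEigenstate_iff_apply_star_mul_self_eq_zero (hω : IsState ω) :
    IsEigenstate ω A l ↔
      ω (star (A - algebraMap ℂ 𝔄 l) * (A - algebraMap ℂ 𝔄 l)) = 0 := by
  rw [isEigenstate_iff_forall_apply_mul_sub_eq_zero hω.2.1]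
  exact ⟨fun h ↦ h _, hω.apply_mul_eq_zero_of_apply_star_mul_self_eq_zero⟩

lemma isEigenstate_algebraMap (hlin : IsLinearMap ℂ ω) (c : ℂ) :
    IsEigenstate ω (algebraMap ℂ 𝔄 c) c :=
  fun B ↦ by rw [← Algebra.commutes, ← Algebra.smul_def, hlin.map_smul, smul_eq_mul]

lemma isClosed_setOf_isEigenstate (hω : Continuous ω) :
    IsClosed {p : 𝔄 × ℂ | IsEigenstate ω p.1 p.2} := by
  simp only [IsEigenstate, Set.ofPred_forall]
  exact isClosed_iInter fun B ↦ isClosed_eq (by fun_prop) (by fun_prop)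

namespace IsEigenstate

lemma add (hlin : IsLinearMap ℂ ω) (h₁ : IsEigenstate ω A₁ l₁) (h₂ : IsEigenstate ω A₂ l₂) :
    IsEigenstate ω (A₁ + A₂) (l₁ + l₂) := fun B ↦ by
  rw [mul_add, hlin.map_add, h₁ B, h₂ B, add_mul]

lemma mul (h₁ : IsEigenstate ω A₁ l₁) (h₂ : IsEigenstate ω A₂ l₂) :
    IsEigenstate ω (A₁ * A₂) (l₁ * l₂) := fun B ↦ by
  rw [← mul_assoc, h₂, h₁, mul_left_comm, mul_assoc]

lemma star (hω : IsState ω) [IsStarNormal A] (h : IsEigenstate ω A l) :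
    IsEigenstate ω (star A) (starRingEnd ℂ l) := by
  rw [hω.isEigenstate_iff_apply_star_mul_self_eq_zero] at h ⊢
  rwa [← RCLike.star_def, algebraMap_star_comm, ← star_sub, star_star,
    ← star_comm_self' (A - algebraMap ℂ 𝔄 l)]

lemma mem_spectrum (hlin : IsLinearMap ℂ ω) (hω₁ : ω 1 ≠ 0) (h : IsEigenstate ω A l) :
    l ∈ spectrum ℂ A := by
  rw [spectrum.mem_iff, ← IsUnit.neg_iff, neg_sub]
  rintro ⟨u, hu⟩
  apply hω₁
  rw [← u.inv_mul, hu]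
  exact (isEigenstate_iff_forall_apply_mul_sub_eq_zero hlin).mp h _

lemma cfcHom (hω : IsState ω) (hA : IsStarNormal A) {x : spectrum ℂ A}
    (h : IsEigenstate ω A x) (g : C(spectrum ℂ A, ℂ)) :
    IsEigenstate ω (_root_.cfcHom hA g) (g x) := by
  have hcont : Continuous ω := hω.1
  have hlin : IsLinearMap ℂ ω := hω.2.1
  induction g using ContinuousMap.induction_on_of_compact with
  | const r =>
    exact (AlgHomClass.commutes (_root_.cfcHom hA) r).symm ▸ isEigenstate_algebraMap hlin r
  | id => simpa [cfcHom_id] using h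
  | star_id => simpa [map_star, cfcHom_id] using h.star hω
  | add g₁ g₂ h₁ h₂ => simpa using h₁.add hlin h₂
  | mul g₁ g₂ h₁ h₂ => simpa using h₁.mul h₂
  | frequently g hg =>
    have hcont' : Continuous fun g : C(spectrum ℂ A, ℂ) ↦ (_root_.cfcHom hA g, g x) :=
      (cfcHom_continuous hA).prodMk (continuous_eval_const x)
    exact ((isClosed_setOf_isEigenstate hcont).preimage hcont').closure_subset
      (mem_closure_iff_frequently.mpr hg)

end IsEigenstate

end Eigenstate

/-- Functional calculus maps eigenstates to eigenstates: if `A` is normal, `f` is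
continuous on the spectrum of `A`, and `ω` is an eigenstate of `A` with eigenvalue `l`,
then `ω` is an eigenstate of `f(A)` with eigenvalue `f(l)`. -/
theorem eigenstate_cfc (A : 𝔄) (hA : A * star A = star A * A) (f : ℂ → ℂ)
    (hf : ContinuousOn f (spectrum ℂ A)) (ω : 𝔄 → ℂ) (hω : IsState ω) (l : ℂ)
    (h : IsEigenstate ω A l) :
    IsEigenstate ω (cfc f A) (f l) := by
  have hA' : IsStarNormal A := ⟨hA.symm⟩
  have hl : l ∈ spectrum ℂ A := h.mem_spectrum hω.2.1 (by simp [hω.2.2.1])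
  rw [cfc_apply f A hA' hf]
  exact h.cfcHom (x := ⟨l, hl⟩) hω hA' _
end

section
/- Let A be a normal element (A A* = A* A) of a unital C*-algebra 𝔄, let ω be a state on 𝔄 that is an eigenstate of A with eigenvalue λ in the spectrum of A, and let f : ℂ → ℂ be continuous. Then for every B ∈ 𝔄 one has ω(B f(A)) − ω(f(A) B) = 0, where f(A) ∈ 𝔄 is defined via the continuous functional calculus for A. -/
variable {𝔄 : Type*} [CStarAlgebra 𝔄]

-- key Cauchy-Schwarz style lemma
lemma key {ω : 𝔄 → ℂ} (hω : IsState ω) {y : 𝔄} (hy : ω (star y * y) = 0)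
    (x : 𝔄) : ω (star x * y) = 0 ∧ ω (star y * x) = 0 := by
  obtain ⟨hc, hlin, h1, hpos⟩ := hω
  set u := ω (star x * y) with hu
  set v := ω (star y * x) with hv
  have expand : ∀ c : ℂ, ω (star (c • y + x) * (c • y + x))
      = starRingEnd ℂ c * v + c * u + ω (star x * x) := by
    intro c
    have : star (c • y + x) * (c • y + x)
        = (starRingEnd ℂ c * c) • (star y * y) + (starRingEnd ℂ c) • (star y * x)
          + c • (star x * y) + star x * x := by
      simp [star_smul, add_mul, mul_add, smul_smul, mul_smul_comm, smul_mul_assoc]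
      ring_nf
      abel
    rw [this, hlin.map_add, hlin.map_add, hlin.map_add, hlin.map_smul, hlin.map_smul,
      hlin.map_smul, hy]
    simp only [smul_eq_mul]
    ring
  obtain ⟨r0, hr0, hr0e⟩ := hpos x
  have hxx : ω (star x * x) = (r0 : ℂ) := hr0e
  -- for real t : nonneg real
  have hreal : ∀ c : ℂ, ∃ r : ℝ, 0 ≤ r ∧ (starRingEnd ℂ c * v + c * u + r0 : ℂ) = r := by
    intro c
    obtain ⟨r, hr, hre⟩ := hpos (c • y + x)
    exact ⟨r, hr, by rw [← hxx, ← expand c, hre]⟩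
  -- conj c * v + c * u + r0 is a nonneg real for every c
  have claim : u = 0 ∧ v = 0 := by
    obtain ⟨r1, hr1, he1⟩ := hreal 1
    obtain ⟨r2, hr2, he2⟩ := hreal (-1)
    obtain ⟨r3, hr3, he3⟩ := hreal Complex.I
    obtain ⟨r4, hr4, he4⟩ := hreal (-Complex.I)
    simp only [map_one, one_mul, map_neg, neg_mul, Complex.conj_I] at he1 he2 he3 he4
    -- from he1, he2 : v + u = r1 - r0 and -(v+u) = r2 - r0, both real
    have h12 : v + u = ((r1 - r0 : ℝ) : ℂ) := by push_cast; linear_combination he1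
    have h21 : -(v + u) = ((r2 - r0 : ℝ) : ℂ) := by push_cast; linear_combination he2
    have h34 : Complex.I * (u - v) = ((r3 - r0 : ℝ) : ℂ) := by push_cast; linear_combination he3
    have h43 : -(Complex.I * (u - v)) = ((r4 - r0 : ℝ) : ℂ) := by push_cast; linear_combination he4
    -- s := v + u real, and r0 + t*s >= 0 for all t... but with only these four points
    -- we need all real t; use hreal at real t
    have hs : ∀ t : ℝ, ∃ r : ℝ, 0 ≤ r ∧ ((t : ℂ) * (v + u) + r0 : ℂ) = r := by
      intro t
      obtain ⟨r, hr, he⟩ := hreal (t : ℂ)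
      rw [Complex.conj_ofReal] at he
      exact ⟨r, hr, by rw [← he]; ring⟩
    have hs' : ∀ t : ℝ, ∃ r : ℝ, 0 ≤ r ∧ ((t : ℂ) * (Complex.I * (u - v)) + r0 : ℂ) = r := by
      intro t
      obtain ⟨r, hr, he⟩ := hreal ((t : ℝ) * Complex.I)
      rw [map_mul, Complex.conj_ofReal, Complex.conj_I] at he
      exact ⟨r, hr, by rw [← he]; ring⟩
    -- generic: if z real-valued in this sense then z = 0
    have gen : ∀ z : ℂ, (∃ s : ℝ, z = (s : ℂ)) →
        (∀ t : ℝ, ∃ r : ℝ, 0 ≤ r ∧ ((t : ℂ) * z + r0 : ℂ) = r) → z = 0 := by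
      rintro z ⟨s, rfl⟩ hz
      norm_cast
      by_contra hne
      obtain ⟨r, hr, he⟩ := hz (-(r0 + 1) / s)
      rw [show ((-(r0+1)/s : ℝ) : ℂ) * (s : ℂ) + (r0 : ℂ) = ((-(r0+1)/s * s + r0 : ℝ) : ℂ) by
        push_cast; ring] at he
      have : -(r0 + 1) / s * s + r0 = r := by exact_mod_cast he
      rw [div_mul_cancel₀ _ hne] at this
      linarith
    have e1 : v + u = 0 := gen _ ⟨r1 - r0, h12⟩ hs
    have e2 : Complex.I * (u - v) = 0 := gen _ ⟨r3 - r0, h34⟩ hs'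
    have e2' : u - v = 0 := by
      rcases mul_eq_zero.mp e2 with hh | hh
      · exact absurd hh Complex.I_ne_zero
      · exact hh
    exact ⟨by linear_combination (e1 + e2') / 2, by linear_combination (e1 - e2') / 2⟩
  exact ⟨claim.1, claim.2⟩

/-- If `A` is normal, `ω` is an eigenstate of `A` with eigenvalue `l` in the spectrum
of `A`, and `f : ℂ → ℂ` is continuous, then `ω` vanishes on all commutators with
`f(A)`. -/
theorem eigenstate_commutator_cfc (A : 𝔄) (hA : A * star A = star A * A) (l : ℂ)
    (hl : l ∈ spectrum ℂ A) (ω : 𝔄 → ℂ) (hω : IsState ω) (h : IsEigenstate ω A l)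
    (f : ℂ → ℂ) (hf : Continuous f) (B : 𝔄) :
    ω (B * cfc f A) - ω (cfc f A * B) = 0 := by
  have hlin := hω.2.1
  have hA' : IsStarNormal A := ⟨hA.symm⟩
  set y := A - l • 1 with hy_def
  have hsy : star y = star A - (starRingEnd ℂ) l • 1 := by
    simp [hy_def, star_smul, RCLike.star_def]
  have hyy : ω (star y * y) = 0 := by
    have e1 : star y * y = star y * A - l • star y := by
      rw [hy_def, mul_sub, mul_smul_comm, mul_one]
    rw [e1, hlin.map_sub, hlin.map_smul, h (star y), smul_eq_mul, sub_self]
  have hyn : y * star y = star y * y := by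
    rw [hy_def, hsy]
    simp only [sub_mul, mul_sub, smul_mul_assoc, mul_smul_comm, mul_one, one_mul, smul_smul]
    rw [hA]
    simp only [smul_sub, smul_smul]
    rw [mul_comm l ((starRingEnd ℂ) l)]
    abel
  have hyy2 : ω (star (star y) * star y) = 0 := by rw [star_star, hyn, hyy]
  have hCy : ∀ C, ω (C * y) = 0 := fun C => by
    simpa using (key hω hyy (star C)).1
  have hsyC : ∀ C, ω (star y * C) = 0 := fun C => (key hω hyy C).2
  have hCsy : ∀ C, ω (C * star y) = 0 := fun C => by
    simpa using (key hω hyy2 (star C)).1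
  have hyC : ∀ C, ω (y * C) = 0 := fun C => by
    simpa [star_star] using (key hω hyy2 C).2
  -- the four eigen-equations
  have eA : ∀ C, ω (C * A) = l * ω C := h
  have eA' : ∀ C, ω (A * C) = l * ω C := by
    intro C
    have := hyC C
    rw [hy_def, sub_mul, smul_mul_assoc, one_mul, hlin.map_sub, hlin.map_smul,
      smul_eq_mul, sub_eq_zero] at this
    exact this
  have eS : ∀ C, ω (C * star A) = (starRingEnd ℂ) l * ω C := by
    intro C
    have := hCsy C
    rw [hsy, mul_sub, mul_smul_comm, mul_one, hlin.map_sub, hlin.map_smul,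
      smul_eq_mul, sub_eq_zero] at this
    exact this
  have eS' : ∀ C, ω (star A * C) = (starRingEnd ℂ) l * ω C := by
    intro C
    have := hsyC C
    rw [hsy, sub_mul, smul_mul_assoc, one_mul, hlin.map_sub, hlin.map_smul,
      smul_eq_mul, sub_eq_zero] at this
    exact this
  set lx : spectrum ℂ A := ⟨l, hl⟩ with hlx
  have main : ∀ g : C(spectrum ℂ A, ℂ), ∀ C : 𝔄,
      ω (C * cfcHom hA' g) = g lx * ω C ∧ ω (cfcHom hA' g * C) = g lx * ω C := by
    intro g
    induction g using ContinuousMap.induction_on_of_compact with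
    | const r =>
      intro C
      have hc : (ContinuousMap.const (spectrum ℂ A) r) = algebraMap ℂ C(spectrum ℂ A, ℂ) r := rfl
      rw [hc, AlgHomClass.commutes, Algebra.algebraMap_eq_smul_one]
      constructor
      · rw [mul_smul_comm, mul_one, hlin.map_smul, smul_eq_mul]; rfl
      · rw [smul_mul_assoc, one_mul, hlin.map_smul, smul_eq_mul]; rfl
    | id =>
      intro C
      rw [cfcHom_id hA']
      exact ⟨eA C, eA' C⟩
    | star_id =>
      intro C
      rw [map_star, cfcHom_id hA']
      have hev : (star ((ContinuousMap.id ℂ).restrict (spectrum ℂ A))) lx = (starRingEnd ℂ) l := rfl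
      rw [hev]
      exact ⟨eS C, eS' C⟩
    | add g₁ g₂ h₁ h₂ =>
      intro C
      rw [map_add]
      constructor
      · rw [mul_add, hlin.map_add, (h₁ C).1, (h₂ C).1, ContinuousMap.add_apply]; ring
      · rw [add_mul, hlin.map_add, (h₁ C).2, (h₂ C).2, ContinuousMap.add_apply]; ring
    | mul g₁ g₂ h₁ h₂ =>
      intro C
      rw [map_mul, ContinuousMap.mul_apply]
      constructor
      · rw [← mul_assoc, (h₂ (C * cfcHom hA' g₁)).1, (h₁ C).1]; ring
      · rw [mul_assoc, (h₁ (cfcHom hA' g₂ * C)).2, (h₂ C).2]; ring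
    | frequently g hg =>
      have hclosed : IsClosed {g : C(spectrum ℂ A, ℂ) | ∀ C : 𝔄,
          ω (C * cfcHom hA' g) = g lx * ω C ∧ ω (cfcHom hA' g * C) = g lx * ω C} := by
        have : {g : C(spectrum ℂ A, ℂ) | ∀ C : 𝔄,
            ω (C * cfcHom hA' g) = g lx * ω C ∧ ω (cfcHom hA' g * C) = g lx * ω C}
            = ⋂ C : 𝔄, ({g : C(spectrum ℂ A, ℂ) | ω (C * cfcHom hA' g) = g lx * ω C} ∩
              {g : C(spectrum ℂ A, ℂ) | ω (cfcHom hA' g * C) = g lx * ω C}) := by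
          ext g; simp [Set.mem_iInter, forall_and]
        rw [this]
        refine isClosed_iInter fun C => IsClosed.inter ?_ ?_
        · exact isClosed_eq
            (hω.1.comp ((continuous_mul_left C).comp (cfcHom_continuous hA')))
            ((continuous_eval_const lx).mul continuous_const)
        · exact isClosed_eq
            (hω.1.comp ((continuous_mul_right C).comp (cfcHom_continuous hA')))
            ((continuous_eval_const lx).mul continuous_const)
      exact hclosed.closure_subset (mem_closure_iff_frequently.mpr hg)
  have hcfc : cfc f A = cfcHom hA' ⟨_, hf.continuousOn.restrict⟩ :=
    cfc_apply f A hA' hf.continuousOn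
  obtain ⟨e1, e2⟩ := main ⟨_, hf.continuousOn.restrict⟩ B
  rw [hcfc, e1, e2, sub_self]
end

section
/- Let H be a self-adjoint element (H = H*) of a unital C*-algebra 𝔄 and let ω be a pure state on 𝔄 (an extreme point of the convex set of states on 𝔄). If ω is invariant under the dynamics generated by H, i.e., ω(exp(itH) · A · exp(−itH)) = ω(A) for all t ∈ ℝ and all A ∈ 𝔄, then ω is an eigenstate of H with eigenvalue ω(H). -/
/-!
Put `v = exp (-itH)`; invariance says `ω (v⋆ a v) = ω a`. For any such `v` and `|w| = 1`, the
positive functionals `ψ_w a = ω ((1 + w v)⋆ a (1 + w v)) / 4` satisfy `ψ_w + ψ_{-w} = ω`, so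
each is dominated by `ω`. A positive functional dominated by a pure state is a multiple of it, and
comparing `w = 1` with `w = i` gives `ω (b v) = ω v * ω b`. Differentiating
`ω (b exp (-itH)) = ω (exp (-itH)) * ω b` at `t = 0` then gives `ω (b H) = ω H * ω b`.
-/

open NormedSpace
open scoped ComplexOrder

variable {𝔄 : Type*} [CStarAlgebra 𝔄]

def IsPureState (ω : 𝔄 → ℂ) : Prop :=
  ω ∈ Set.extremePoints ℝ {φ : 𝔄 → ℂ | IsState φ}

theorem ContinuousLinearMap.hasDerivAt_apply_mul_exp_smul {𝔸 F : Type*} [NormedRing 𝔸]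
    [NormedAlgebra ℝ 𝔸] [CompleteSpace 𝔸] [NormedAddCommGroup F] [NormedSpace ℝ F]
    (L : 𝔸 →L[ℝ] F) (b x : 𝔸) :
    HasDerivAt (fun t : ℝ => L (b * exp (t • x))) (L (b * x)) 0 := by
  have hexp := (hasDerivAt_exp_smul_const x (0 : ℝ)).const_mul b
  rw [zero_smul, exp_zero, one_mul] at hexp
  exact L.hasFDerivAt.comp_hasDerivAt 0 hexp

theorem ContinuousLinearMap.isState_iff (φ : 𝔄 →L[ℂ] ℂ) :
    IsState φ ↔ φ 1 = 1 ∧ ∀ a : 𝔄, 0 ≤ φ (star a * a) := by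
  have hpos (z : ℂ) : (∃ r : ℝ, 0 ≤ r ∧ z = r) ↔ 0 ≤ z := by
    rw [RCLike.nonneg_iff_exists_ofReal]
    exact exists_congr fun r => and_congr_right' eq_comm
  simp only [IsState, hpos, φ.continuous, true_and]
  exact and_iff_right φ.toLinearMap.isLinear

namespace IsState

variable {ω : 𝔄 → ℂ}

noncomputable def toContinuousLinearMap (hω : IsState ω) : 𝔄 →L[ℂ] ℂ where
  toLinearMap := IsLinearMap.mk' ω hω.2.1
  cont := hω.1

@[simp]
theorem coe_toContinuousLinearMap (hω : IsState ω) : ⇑hω.toContinuousLinearMap = ω := rfl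

theorem map_star_mul_self_nonneg (hω : IsState ω) (a : 𝔄) : 0 ≤ ω (star a * a) :=
  (hω.toContinuousLinearMap.isState_iff.1 hω).2 a

theorem map_mul_eq_of_forall_exp (hω : IsState ω) {x b : 𝔄}
    (h : ∀ t : ℝ, ω (b * exp (t • x)) = ω (exp (t • x)) * ω b) :
    ω (b * x) = ω x * ω b := by
  have hderiv (c : 𝔄) :=
    (hω.toContinuousLinearMap.restrictScalars ℝ).hasDerivAt_apply_mul_exp_smul c x
  have hb := hderiv b
  simp only [ContinuousLinearMap.coe_restrictScalars', coe_toContinuousLinearMap, h] at hb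
  exact hb.unique (by simpa using (hderiv 1).mul_const (ω b))

end IsState

namespace IsPureState

variable {ω : 𝔄 → ℂ}

theorem isState (hω : IsPureState ω) : IsState ω := hω.1

theorem apply_eq_apply_one_mul_of_le (hω : IsPureState ω) (ψ : 𝔄 →L[ℂ] ℂ)
    (hψ : ∀ a, 0 ≤ ψ (star a * a)) (hψω : ∀ a, ψ (star a * a) ≤ ω (star a * a)) (b : 𝔄) :
    ψ b = ψ 1 * ω b := by
  have hω₀ := hω.isState
  set ω' := hω₀.toContinuousLinearMap
  have hω1 : ω 1 = 1 := hω₀.2.2.1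
  have hc0 : 0 ≤ ψ 1 := by simpa using hψ 1
  have hc1 : ψ 1 ≤ 1 := by simpa [hω1] using hψω 1
  -- `ω` is the midpoint of the states `(1 - c) ω + ψ` and `c ω + (ω - ψ)`,
  -- where `c = ψ 1 ∈ [0, 1]`.
  have hφ₁ : IsState ⇑((1 - ψ 1) • ω' + ψ) := by
    refine ContinuousLinearMap.isState_iff _ |>.2 ⟨by simp [ω', hω1], fun a => ?_⟩
    simp only [add_apply, smul_apply, smul_eq_mul]
    exact add_nonneg (mul_nonneg (sub_nonneg.2 hc1) (hω₀.map_star_mul_self_nonneg a)) (hψ a)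
  have hφ₂ : IsState ⇑(ψ 1 • ω' + (ω' - ψ)) := by
    refine ContinuousLinearMap.isState_iff _ |>.2 ⟨by simp [ω', hω1], fun a => ?_⟩
    simp only [add_apply, sub_apply,
      smul_apply, smul_eq_mul]
    exact add_nonneg (mul_nonneg hc0 (hω₀.map_star_mul_self_nonneg a)) (sub_nonneg.2 (hψω a))
  have hmid : ω ∈ openSegment ℝ ⇑((1 - ψ 1) • ω' + ψ) ⇑(ψ 1 • ω' + (ω' - ψ)) :=
    ⟨1 / 2, 1 / 2, by norm_num, by norm_num, by norm_num, by ext; simp [ω']; ring⟩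
  have hb := congrFun (hω.2 hφ₁ hφ₂ hmid) b
  simp only [add_apply, smul_apply, smul_eq_mul,
    ω', IsState.coe_toContinuousLinearMap] at hb
  linear_combination hb

theorem map_mul_eq_of_map_star_mul_mul (hω : IsPureState ω) {v : 𝔄}
    (hv : ∀ a, ω (star v * a * v) = ω a) (b : 𝔄) :
    ω (b * v) = ω v * ω b := by
  set ω' := hω.isState.toContinuousLinearMap
  let ψ (w : ℂ) : 𝔄 →L[ℂ] ℂ :=
    (4 : ℂ)⁻¹ • ω'.comp (ContinuousLinearMap.mulLeftRight ℂ 𝔄 (star (1 + w • v)) (1 + w • v))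
  have hψ (w : ℂ) (hw : w * starRingEnd ℂ w = 1) (a : 𝔄) :
      ψ w a = (2 * ω a + w * ω (a * v) + starRingEnd ℂ w * ω (star v * a)) / 4 := by
    have hexpand : star (1 + w • v) * a * (1 + w • v) = a + w • (a * v)
        + starRingEnd ℂ w • (star v * a) + (w * starRingEnd ℂ w) • (star v * a * v) := by
      simp only [star_add, star_one, star_smul, RCLike.star_def, add_mul, mul_add, one_mul,
        mul_one, smul_mul_assoc, mul_smul_comm, smul_add, smul_smul]
      abel
    simp only [ψ, smul_apply, ContinuousLinearMap.comp_apply,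
      ContinuousLinearMap.mulLeftRight_apply]
    rw [hexpand]
    simp only [map_add, map_smul, hw, one_smul, smul_eq_mul, ω',
      IsState.coe_toContinuousLinearMap, hv]
    ring
  have hψ_nonneg (w : ℂ) (a : 𝔄) : 0 ≤ ψ w (star a * a) := by
    have hconj : star (1 + w • v) * (star a * a) * (1 + w • v)
        = star (a * (1 + w • v)) * (a * (1 + w • v)) := by
      simp only [star_mul, mul_assoc]
    simp only [ψ, smul_apply, ContinuousLinearMap.comp_apply,
      ContinuousLinearMap.mulLeftRight_apply, hconj, smul_eq_mul]
    exact mul_nonneg (by rw [Complex.nonneg_iff]; norm_num)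
      (hω.isState.map_star_mul_self_nonneg _)
  have hψ_le (w : ℂ) (hw : w * starRingEnd ℂ w = 1) (a : 𝔄) :
      ψ w (star a * a) ≤ ω (star a * a) := by
    have hw' : -w * starRingEnd ℂ (-w) = 1 := by simpa using hw
    have hsum : ω (star a * a) = ψ w (star a * a) + ψ (-w) (star a * a) := by
      rw [hψ w hw, hψ (-w) hw', map_neg]
      ring
    rw [hsum]
    exact le_add_of_nonneg_right (hψ_nonneg _ _)
  have hmultiple (w : ℂ) (hw : w * starRingEnd ℂ w = 1) :
      w * ω (b * v) + starRingEnd ℂ w * ω (star v * b)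
        = (w * ω v + starRingEnd ℂ w * ω (star v)) * ω b := by
    have h := hω.apply_eq_apply_one_mul_of_le (ψ w) (hψ_nonneg w) (hψ_le w hw) b
    rw [hψ w hw, hψ w hw, hω.isState.2.2.1] at h
    simp only [one_mul, mul_one] at h
    linear_combination 4 * h
  have h1 := hmultiple 1 (by simp)
  have hI := hmultiple Complex.I (by simp)
  simp only [map_one, Complex.conj_I, one_mul] at h1 hI
  linear_combination (h1 - Complex.I * hI
    + (ω (b * v) - ω (star v * b) - (ω v - ω (star v)) * ω b) * Complex.I_sq) / 2

end IsPureState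

/-- A pure state (an extreme point of the set of states) invariant under the dynamics
generated by a self-adjoint element `H` is an eigenstate of `H` (with eigenvalue
`ω H`). -/
theorem pure_invariant_state_is_eigenstate (H : 𝔄) (hH : star H = H) (ω : 𝔄 → ℂ)
    (hpure : ω ∈ Set.extremePoints ℝ {φ : 𝔄 → ℂ | IsState φ})
    (hinv : ∀ (t : ℝ) (A : 𝔄),
      ω (NormedSpace.exp ((Complex.I * (t : ℂ)) • H) * A *
          NormedSpace.exp ((-(Complex.I * (t : ℂ))) • H)) = ω A) :
    IsEigenstate ω H (ω H) := by
  intro B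
  have hpure' : IsPureState ω := hpure
  set X : 𝔄 := -(Complex.I • H)
  have hexp (t : ℝ) : exp ((-(Complex.I * t)) • H) = exp (t • X) := by
    rw [← Complex.coe_smul]
    simp [X, smul_smul, mul_comm]
  have hstar (t : ℝ) : star (exp (t • X)) = exp ((Complex.I * t) • H) := by
    rw [star_exp]
    congr 1
    simp [X, hH, ← Complex.coe_smul, smul_smul, mul_comm]
  have hmul (t : ℝ) : ω (B * exp (t • X)) = ω (exp (t • X)) * ω B :=
    hpure'.map_mul_eq_of_map_star_mul_mul (fun A => by rw [hstar, ← hexp]; exact hinv t A) B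
  have hX := hpure'.isState.map_mul_eq_of_forall_exp hmul
  rw [← hpure'.isState.coe_toContinuousLinearMap] at hX ⊢
  simp only [X, mul_neg, mul_smul_comm, map_neg, map_smul, smul_eq_mul] at hX
  exact mul_left_cancel₀ Complex.I_ne_zero (by linear_combination -hX)
end

section
/- Let H be a self-adjoint element (H = H*) of a unital C*-algebra 𝔄, let π : 𝔄 → B(ℋ) be a unital *-representation on a nonzero complex Hilbert space ℋ with a unit vector ψ that is cyclic (i.e., {π(A)ψ : A ∈ 𝔄} is dense in ℋ), let ω(A) := ⟨ψ, π(A)ψ⟩, and assume ω is a ground state for H, i.e., λ* := ω(H) = min Spec(π(H)). Then the following are equivalent: (a) there exists Δ > 0 such that Spec(π(H)) ∩ (λ*, λ* + Δ) = ∅ and the kernel of π(H) − λ*·1 is the one-dimensional subspace ℂ·ψ (non-degenerate gapped ground state); (b) there exists Δ > 0 such that for every A ∈ 𝔄 the number ω(A* H A − A* A H) is real and satisfies ω(A* H A − A* A H) ≥ Δ·(ω(A* A) − |ω(A)|²). -/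
variable {𝔄 : Type*} [CStarAlgebra 𝔄]

/-
With `S := π H - λ⋆`, one has `ω (A* H A - A* A H) = ⟪π A ψ, S (π A ψ)⟫` and
`ω (A* A) - |ω A|² = ‖π A ψ‖² - |⟪ψ, π A ψ⟫|²`, so by cyclicity (b) says that the quadratic
form of `S` dominates `Δ` times that of `1 - |ψ⟩⟨ψ|`; the ground-state condition makes `S ≥ 0`
with `S ψ = 0`.

If the spectrum of `S` avoids `(0, Δ)`, the continuous functional calculus applied to
`x ↦ x / max x Δ` (which is `0` at `0` and `1` on `[Δ, ∞)`) gives `Q` with `Δ • Q ≤ S`,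
`S Q = S` and `Q = 0` on `ker S`; so `1 - Q` maps into `ker S = ℂ ψ` and fixes it, which turns
`Δ • Q ≤ S` into (b). Conversely, a spectral point `t ∈ (0, Δ)` yields, through a bump function
around `t` vanishing near `0`, a nonzero `φ ⊥ ψ` with `⟪φ, S φ⟫ < Δ ‖φ‖²`, and a kernel vector
`φ` satisfies `‖φ - ⟪ψ, φ⟫ ψ‖² ≤ 0`.
-/

open scoped InnerProductSpace
open Set RCLike ContinuousLinearMap

section HilbertSpace

variable {E : Type*} [NormedAddCommGroup E] [InnerProductSpace ℂ E]

lemma inner_sub_inner_smul_self (ψ φ : E) :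
    ⟪φ, φ - ⟪ψ, φ⟫_ℂ • ψ⟫_ℂ = ((‖φ‖ ^ 2 - ‖⟪ψ, φ⟫_ℂ‖ ^ 2 : ℝ) : ℂ) := by
  rw [inner_sub_right, inner_smul_right, ← inner_conj_symm φ ψ, Complex.mul_conj,
    inner_self_eq_norm_sq_to_K, Complex.normSq_eq_norm_sq]
  push_cast; rfl

lemma norm_sub_inner_smul_sq {ψ : E} (hψ : ‖ψ‖ = 1) (φ : E) :
    ‖φ - ⟪ψ, φ⟫_ℂ • ψ‖ ^ 2 = ‖φ‖ ^ 2 - ‖⟪ψ, φ⟫_ℂ‖ ^ 2 := by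
  rw [@norm_sub_sq ℂ, inner_smul_right, ← inner_conj_symm φ ψ, Complex.mul_conj, norm_smul, hψ,
    Complex.normSq_eq_norm_sq, re_to_complex, Complex.ofReal_re]
  ring

lemma ContinuousLinearMap.re_inner_apply_le_of_le {A B : E →L[ℂ] E} (h : A ≤ B) (x : E) :
    re ⟪x, A x⟫_ℂ ≤ re ⟪x, B x⟫_ℂ := by
  have := ((le_def A B).mp h).re_inner_nonneg_right x
  rwa [sub_apply, inner_sub_right, map_sub, sub_nonneg] at this

lemma re_inner_real_smul_apply (T : E →L[ℂ] E) (r : ℝ) (x : E) :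
    re ⟪x, (r • T) x⟫_ℂ = r * re ⟪x, T x⟫_ℂ := by
  rw [smul_apply, real_smul_eq_coe_smul (K := ℂ), inner_smul_right, re_ofReal_mul]

lemma ker_eq_span_of_re_inner_apply_ge {S : E →L[ℂ] E} {ψ : E} (hψ : ‖ψ‖ = 1) (hSψ : S ψ = 0)
    {Δ : ℝ} (hΔ : 0 < Δ) (h : ∀ φ, Δ * (‖φ‖ ^ 2 - ‖⟪ψ, φ⟫_ℂ‖ ^ 2) ≤ re ⟪φ, S φ⟫_ℂ) :
    LinearMap.ker (S : E →ₗ[ℂ] E) = ℂ ∙ ψ := by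
  refine le_antisymm (fun φ hφ ↦ ?_) ((Submodule.span_singleton_le_iff_mem _ _).mpr hSψ)
  have hφ : S φ = 0 := hφ
  have hnorm : ‖φ - ⟪ψ, φ⟫_ℂ • ψ‖ ^ 2 ≤ 0 := by
    have := h φ
    rw [hφ, inner_zero_right, map_zero] at this
    rw [norm_sub_inner_smul_sq hψ]
    nlinarith
  rw [sq_nonpos_iff, norm_eq_zero, sub_eq_zero] at hnorm
  exact Submodule.mem_span_singleton.mpr ⟨_, hnorm.symm⟩

lemma forall_re_inner_apply_ge_of_dense {s : Set E} (hs : Dense s) (S : E →L[ℂ] E) (ψ : E)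
    (Δ : ℝ) (h : ∀ φ ∈ s, Δ * (‖φ‖ ^ 2 - ‖⟪ψ, φ⟫_ℂ‖ ^ 2) ≤ re ⟪φ, S φ⟫_ℂ) (φ : E) :
    Δ * (‖φ‖ ^ 2 - ‖⟪ψ, φ⟫_ℂ‖ ^ 2) ≤ re ⟪φ, S φ⟫_ℂ := by
  have hclosed : IsClosed {φ : E | Δ * (‖φ‖ ^ 2 - ‖⟪ψ, φ⟫_ℂ‖ ^ 2) ≤ re ⟪φ, S φ⟫_ℂ} :=
    isClosed_le (by fun_prop) (by fun_prop)
  exact hclosed.closure_subset_iff.mpr h (hs.closure_eq ▸ mem_univ φ)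

variable [CompleteSpace E]

lemma IsSelfAdjoint.inner_apply_left {S : E →L[ℂ] E} (hS : IsSelfAdjoint S) (x y : E) :
    ⟪S x, y⟫_ℂ = ⟪x, S y⟫_ℂ :=
  hS.isSymmetric x y

lemma IsSelfAdjoint.inner_apply_self_eq_re {S : E →L[ℂ] E} (hS : IsSelfAdjoint S) (x : E) :
    ⟪x, S x⟫_ℂ = (re ⟪x, S x⟫_ℂ : ℂ) := by
  rw [← hS.inner_apply_left]
  exact (hS.isSymmetric.coe_re_inner_apply_self x).symm

lemma ContinuousLinearMap.apply_eq_zero_of_inner_self_eq_zero {S : E →L[ℂ] E} (hS : 0 ≤ S)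
    {ψ : E} (h : ⟪ψ, S ψ⟫_ℂ = 0) : S ψ = 0 := by
  have hsqrt : CFC.sqrt S * CFC.sqrt S = S := CFC.sqrt_mul_sqrt_self S
  have : ⟪CFC.sqrt S ψ, CFC.sqrt S ψ⟫_ℂ = 0 := by
    rwa [(CFC.sqrt_nonneg S).isSelfAdjoint.inner_apply_left, ← mul_apply_eq_comp, hsqrt]
  rw [← hsqrt, mul_apply_eq_comp, inner_self_eq_zero.mp this, map_zero]

lemma cfc_mul_id_apply_of_apply_eq_zero {S : E →L[ℂ] E} (hS : IsSelfAdjoint S) {ψ : E}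
    (hSψ : S ψ = 0) (g : ℝ → ℝ) (hg : ContinuousOn g (spectrum ℝ S)) :
    cfc (fun x ↦ g x * x) S ψ = 0 := by
  rw [cfc_mul g (fun x ↦ x) S, cfc_id' ℝ S, mul_apply_eq_comp, hSψ, map_zero]

lemma exists_smul_le_self_of_spectrum_gap {S : E →L[ℂ] E} (hS : IsSelfAdjoint S) {Δ : ℝ}
    (hΔ : 0 < Δ) (hspec : ∀ x ∈ spectrum ℝ S, x = 0 ∨ Δ ≤ x) :
    ∃ Q : E →L[ℂ] E, IsSelfAdjoint Q ∧ S * Q = S ∧ (∀ ψ, S ψ = 0 → Q ψ = 0) ∧ Δ • Q ≤ S := by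
  set m : ℝ → ℝ := fun x ↦ (max x Δ)⁻¹
  have hm : Continuous m :=
    (continuous_id.max continuous_const).inv₀ fun x ↦ (hΔ.trans_le (le_max_right x Δ)).ne'
  refine ⟨cfc (fun x ↦ m x * x) S, cfc_predicate _ _, ?_,
    fun ψ hψ ↦ cfc_mul_id_apply_of_apply_eq_zero hS hψ m hm.continuousOn, ?_⟩
  · calc S * cfc (fun x ↦ m x * x) S = cfc (fun x ↦ x * (m x * x)) S := by
          rw [cfc_mul (fun x ↦ x) (fun x ↦ m x * x) S, cfc_id' ℝ S]
      _ = cfc (fun x ↦ x) S := cfc_congr fun x hx ↦ by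
          rcases hspec x hx with rfl | hx
          · simp
          · simp [m, max_eq_left hx, (hΔ.trans_le hx).ne']
      _ = S := cfc_id' ℝ S
  · calc Δ • cfc (fun x ↦ m x * x) S = cfc (fun x ↦ Δ * (m x * x)) S :=
          (cfc_const_mul Δ _ S (hm.mul continuous_id).continuousOn).symm
      _ ≤ cfc (fun x ↦ x) S := by
          refine cfc_mono (fun x hx ↦ ?_) (continuous_const.mul (hm.mul continuous_id)).continuousOn
          rcases hspec x hx with rfl | hx
          · simp
          · simpa [m, max_eq_left hx, (hΔ.trans_le hx).ne'] using hx
      _ = S := cfc_id' ℝ S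

lemma cfc_apply_eq_zero_of_eq_zero_of_le {S : E →L[ℂ] E} (hS : IsSelfAdjoint S) {ψ : E}
    (hSψ : S ψ = 0) {g : ℝ → ℝ} (hg : Continuous g) {a : ℝ} (ha : 0 < a)
    (hga : ∀ x ≤ a, g x = 0) : cfc g S ψ = 0 := by
  have hfactor : (fun x ↦ g x / max x a * x) = g := funext fun x ↦ by
    rcases le_or_gt x a with hx | hx
    · simp [hga x hx]
    · rw [max_eq_left hx.le, div_mul_cancel₀ _ (by linarith)]
  have hcont : Continuous fun x ↦ g x / max x a :=
    hg.div (by fun_prop) fun x ↦ (by linarith [le_max_right x a] : max x a ≠ 0)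
  rw [← hfactor]
  exact cfc_mul_id_apply_of_apply_eq_zero hS hSψ _ hcont.continuousOn

lemma cfc_mul_mul_cfc_le_smul {S : E →L[ℂ] E} (hS : IsSelfAdjoint S) {g : ℝ → ℝ}
    (hg : Continuous g) {b : ℝ} (hgb : ∀ x, g x ≠ 0 → x < b) :
    cfc g S * S * cfc g S ≤ b • (cfc g S * cfc g S) := calc
  cfc g S * S * cfc g S = cfc (fun x ↦ g x * x * g x) S := by
    rw [cfc_mul (fun x ↦ g x * x) g S (hg.mul continuous_id).continuousOn hg.continuousOn,
      cfc_mul g (fun x ↦ x) S hg.continuousOn continuousOn_id, cfc_id' ℝ S]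
  _ ≤ cfc (fun x ↦ b * (g x * g x)) S := by
    refine cfc_mono (fun x _ ↦ ?_) ((hg.mul continuous_id).mul hg).continuousOn
      (continuous_const.mul (hg.mul hg)).continuousOn
    rcases eq_or_ne (g x) 0 with h | h
    · simp [h]
    · nlinarith [hgb x h, mul_self_nonneg (g x)]
  _ = b • (cfc g S * cfc g S) := by
    rw [cfc_const_mul b (fun x ↦ g x * g x) S (hg.mul hg).continuousOn,
      cfc_mul g g S hg.continuousOn hg.continuousOn]

lemma exists_re_inner_apply_le_of_mem_spectrum {S : E →L[ℂ] E} (hS : IsSelfAdjoint S) {t b : ℝ}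
    (ht : t ∈ spectrum ℝ S) (ht0 : 0 < t) (htb : t < b) :
    ∃ φ : E, φ ≠ 0 ∧ (∀ ψ, S ψ = 0 → ⟪ψ, φ⟫_ℂ = 0) ∧ re ⟪φ, S φ⟫_ℂ ≤ b * ‖φ‖ ^ 2 := by
  obtain ⟨a, ha0, hat⟩ : ∃ a, 0 < a ∧ a < t := ⟨t / 2, by linarith, by linarith⟩
  set g : ℝ → ℝ := fun x ↦ max 0 (min (x - a) (b - x))
  have hg : Continuous g := by fun_prop
  have hg_of_le : ∀ x ≤ a, g x = 0 := fun x hx ↦ max_eq_left (min_le_of_left_le (by linarith))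
  have hg_lt : ∀ x, g x ≠ 0 → x < b := fun x hx ↦ by
    by_contra! h
    exact hx (max_eq_left (min_le_of_right_le (by linarith)))
  set G := cfc g S
  have hG : IsSelfAdjoint G := cfc_predicate g S
  obtain ⟨χ, hχ⟩ : ∃ χ, G χ ≠ 0 := by
    by_contra! h
    have hgt : ‖g t‖₊ ≤ ‖G‖₊ := nnnorm_apply_le_nnnorm_cfc g S ht
    rw [show G = 0 from ext h, nnnorm_zero, nonpos_iff_eq_zero, nnnorm_eq_zero] at hgt
    exact (lt_max_of_lt_right (lt_min (by linarith) (by linarith)) : 0 < g t).ne' hgt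
  refine ⟨G χ, hχ, fun ψ hψ ↦ ?_, ?_⟩
  · rw [← hG.inner_apply_left, cfc_apply_eq_zero_of_eq_zero_of_le hS hψ hg ha0 hg_of_le,
      inner_zero_left]
  calc re ⟪G χ, S (G χ)⟫_ℂ = re ⟪χ, (G * S * G) χ⟫_ℂ := by
        rw [mul_apply_eq_comp, mul_apply_eq_comp, hG.inner_apply_left]
    _ ≤ re ⟪χ, (b • (G * G)) χ⟫_ℂ :=
        re_inner_apply_le_of_le (cfc_mul_mul_cfc_le_smul hS hg hg_lt) χ
    _ = b * ‖G χ‖ ^ 2 := by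
        rw [re_inner_real_smul_apply, mul_apply_eq_comp, ← hG.inner_apply_left,
          inner_self_eq_norm_sq]

lemma spectrum_inter_Ioo_eq_empty_of_re_inner_apply_ge {S : E →L[ℂ] E} (hS : IsSelfAdjoint S)
    {ψ : E} (hSψ : S ψ = 0) {Δ : ℝ} (h : ∀ φ, Δ * (‖φ‖ ^ 2 - ‖⟪ψ, φ⟫_ℂ‖ ^ 2) ≤ re ⟪φ, S φ⟫_ℂ) :
    spectrum ℝ S ∩ Ioo 0 Δ = ∅ := by
  refine eq_empty_iff_forall_notMem.mpr fun t ⟨ht, ht0, htΔ⟩ ↦ ?_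
  obtain ⟨φ, hφ, hψφ, hle⟩ :=
    exists_re_inner_apply_le_of_mem_spectrum hS ht ht0 (by linarith : t < (t + Δ) / 2)
  have hge := h φ
  rw [hψφ ψ hSψ, norm_zero] at hge
  have hφ_pos : 0 < ‖φ‖ ^ 2 := by positivity
  nlinarith

lemma re_inner_apply_ge_of_spectrum_gap {S : E →L[ℂ] E} (hS : 0 ≤ S) {ψ : E} (hψ : ‖ψ‖ = 1)
    {Δ : ℝ} (hΔ : 0 < Δ) (hgap : spectrum ℝ S ∩ Ioo 0 Δ = ∅)
    (hker : LinearMap.ker (S : E →ₗ[ℂ] E) = ℂ ∙ ψ) (φ : E) :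
    Δ * (‖φ‖ ^ 2 - ‖⟪ψ, φ⟫_ℂ‖ ^ 2) ≤ re ⟪φ, S φ⟫_ℂ := by
  have hspec : ∀ x ∈ spectrum ℝ S, x = 0 ∨ Δ ≤ x := fun x hx ↦ by
    by_contra! h
    exact eq_empty_iff_forall_notMem.mp hgap x
      ⟨hx, (spectrum_nonneg_of_nonneg hS hx).lt_of_ne' h.1, h.2⟩
  obtain ⟨Q, hQ, hSQ, hQker, hle⟩ := exists_smul_le_self_of_spectrum_gap hS.isSelfAdjoint hΔ hspec
  have hQψ : Q ψ = 0 := hQker ψ (hker ▸ Submodule.mem_span_singleton_self ψ :)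
  have hQφ : Q φ = φ - ⟪ψ, φ⟫_ℂ • ψ := by
    have hmem : φ - Q φ ∈ ℂ ∙ ψ := by
      rw [← hker, LinearMap.mem_ker, ContinuousLinearMap.coe_coe, map_sub, ← mul_apply_eq_comp,
        hSQ, sub_self]
    obtain ⟨c, hc⟩ := Submodule.mem_span_singleton.mp hmem
    have hcψ : c = ⟪ψ, φ⟫_ℂ := by
      have := congrArg (⟪ψ, ·⟫_ℂ) hc
      simp only [inner_smul_right, inner_sub_right, ← hQ.inner_apply_left, hQψ, inner_zero_left,
        sub_zero, inner_self_eq_norm_sq_to_K, hψ] at this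
      simpa using this
    rw [← hcψ, hc, sub_sub_cancel]
  calc Δ * (‖φ‖ ^ 2 - ‖⟪ψ, φ⟫_ℂ‖ ^ 2) = re ⟪φ, (Δ • Q) φ⟫_ℂ := by
        rw [re_inner_real_smul_apply, hQφ, inner_sub_inner_smul_self, re_to_complex,
          Complex.ofReal_re]
    _ ≤ re ⟪φ, S φ⟫_ℂ := re_inner_apply_le_of_le hle φ

theorem spectrum_inter_Ioo_eq_empty_and_ker_eq_span_iff {S : E →L[ℂ] E} (hS : 0 ≤ S) {ψ : E}
    (hψ : ‖ψ‖ = 1) (hSψ : S ψ = 0) {Δ : ℝ} (hΔ : 0 < Δ) :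
    (spectrum ℝ S ∩ Ioo 0 Δ = ∅ ∧ LinearMap.ker (S : E →ₗ[ℂ] E) = ℂ ∙ ψ) ↔
      ∀ φ, Δ * (‖φ‖ ^ 2 - ‖⟪ψ, φ⟫_ℂ‖ ^ 2) ≤ re ⟪φ, S φ⟫_ℂ :=
  ⟨fun ⟨hgap, hker⟩ ↦ re_inner_apply_ge_of_spectrum_gap hS hψ hΔ hgap hker,
    fun h ↦ ⟨spectrum_inter_Ioo_eq_empty_of_re_inner_apply_ge hS.isSelfAdjoint hSψ h,
      ker_eq_span_of_re_inner_apply_ge hψ hSψ hΔ h⟩⟩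

end HilbertSpace

lemma spectrum_sub_algebraMap_inter_Ioo_eq_empty_iff {A : Type*} [Ring A] [Algebra ℝ A] (a : A)
    (c Δ : ℝ) :
    spectrum ℝ (a - algebraMap ℝ A c) ∩ Ioo 0 Δ = ∅ ↔ spectrum ℝ a ∩ Ioo c (c + Δ) = ∅ := by
  have hmem (x : ℝ) : x ∈ spectrum ℝ (a - algebraMap ℝ A c) ↔ x + c ∈ spectrum ℝ a := by
    rw [spectrum.add_mem_iff, neg_add_eq_sub]
  simp only [eq_empty_iff_forall_notMem, mem_inter_iff, mem_Ioo, hmem]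
  constructor
  · rintro h y ⟨hy, hcy, hyc⟩
    exact h (y - c) ⟨by rwa [sub_add_cancel], by linarith, by linarith⟩
  · rintro h x ⟨hx, hx0, hxΔ⟩
    exact h (x + c) ⟨hx, by linarith, by linarith⟩

section Representation

variable {𝔅 E : Type*} [Ring 𝔅] [StarRing 𝔅] [Algebra ℂ 𝔅] [NormedAddCommGroup E]
  [InnerProductSpace ℂ E] [CompleteSpace E] (π : 𝔅 →⋆ₐ[ℂ] (E →L[ℂ] E))

lemma inner_map_star_mul_apply (A B : 𝔅) (ψ : E) :
    ⟪ψ, π (star A * B) ψ⟫_ℂ = ⟪π A ψ, π B ψ⟫_ℂ := by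
  rw [map_mul, map_star, star_eq_adjoint, mul_apply_eq_comp, adjoint_inner_right]

lemma inner_map_commutator_apply {H : 𝔅} {ψ : E} {c : ℂ} (hψ : π H ψ = c • ψ) (A : 𝔅) :
    ⟪ψ, π (star A * H * A - star A * A * H) ψ⟫_ℂ = ⟪π A ψ, (π H - c • 1) (π A ψ)⟫_ℂ := by
  rw [mul_assoc, mul_assoc, ← mul_sub, inner_map_star_mul_apply, map_sub, map_mul, map_mul,
    sub_apply, mul_apply_eq_comp, mul_apply_eq_comp, hψ, map_smul, sub_apply, smul_apply,
    one_apply_eq_self]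

end Representation

theorem gapped_ground_state_iff_general {H : Type*} [NormedAddCommGroup H]
    [InnerProductSpace ℂ H] [CompleteSpace H]
    (Hop : 𝔄) (hH : star Hop = Hop) (π : 𝔄 →⋆ₐ[ℂ] (H →L[ℂ] H)) (ψ : H) (hψ : ‖ψ‖ = 1)
    (hcyc : Dense {x : H | ∃ A : 𝔄, x = π A ψ})
    (ω : 𝔄 → ℂ) (hω : ∀ A : 𝔄, ω A = (inner ℂ ψ (π A ψ) : ℂ))
    (lstar : ℝ) (hl₁ : ω Hop = (lstar : ℂ)) (hl₂ : lstar = sInf (spectrum ℝ (π Hop))) :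
    (∃ Δ : ℝ, 0 < Δ ∧ spectrum ℝ (π Hop) ∩ Set.Ioo lstar (lstar + Δ) = ∅ ∧
        LinearMap.ker ((π Hop - (lstar : ℂ) • (1 : H →L[ℂ] H)) : H →ₗ[ℂ] H) = Submodule.span ℂ {ψ}) ↔
      (∃ Δ : ℝ, 0 < Δ ∧ ∀ A : 𝔄, ∃ r s : ℝ,
        ω (star A * Hop * A - star A * A * Hop) = (r : ℂ) ∧
        ω (star A * A) = (s : ℂ) ∧ Δ * (s - ‖ω A‖ ^ 2) ≤ r) := by
  have halg : (lstar : ℂ) • (1 : H →L[ℂ] H) = algebraMap ℝ (H →L[ℂ] H) lstar := by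
    rw [Algebra.algebraMap_eq_smul_one, real_smul_eq_coe_smul (K := ℂ)]
    rfl
  set S := π Hop - (lstar : ℂ) • (1 : H →L[ℂ] H) with hS_def
  have hS : 0 ≤ S := by
    rw [hS_def, halg, sub_nonneg, algebraMap_le_iff_le_spectrum (IsSelfAdjoint.map hH π)]
    exact fun x hx ↦ hl₂ ▸ csInf_le (spectrum.isBounded _).bddBelow hx
  have hSψ : S ψ = 0 := by
    refine apply_eq_zero_of_inner_self_eq_zero hS ?_
    simp [S, ← hω, hl₁, inner_self_eq_norm_sq_to_K, hψ]
  have hHψ : π Hop ψ = (lstar : ℂ) • ψ := by simpa [S, sub_eq_zero] using hSψ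
  have hstate (Δ : ℝ) (A : 𝔄) : (∃ r s : ℝ, ω (star A * Hop * A - star A * A * Hop) = (r : ℂ) ∧
      ω (star A * A) = (s : ℂ) ∧ Δ * (s - ‖ω A‖ ^ 2) ≤ r) ↔
      Δ * (‖π A ψ‖ ^ 2 - ‖⟪ψ, π A ψ⟫_ℂ‖ ^ 2) ≤ re ⟪π A ψ, S (π A ψ)⟫_ℂ := by
    rw [hω, hω, hω, inner_map_commutator_apply π hHψ, inner_map_star_mul_apply,
      hS.isSelfAdjoint.inner_apply_self_eq_re, inner_self_eq_norm_sq_to_K]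
    simp [← Complex.ofReal_pow]
  -- the statement coerces `S` to `→ₗ` termwise
  have hcoe : (π Hop : H →ₗ[ℂ] H) - (lstar : ℂ) • ((1 : H →L[ℂ] H) : H →ₗ[ℂ] H) = S := rfl
  refine exists_congr fun Δ ↦ and_congr_right fun hΔ ↦ ?_
  rw [← spectrum_sub_algebraMap_inter_Ioo_eq_empty_iff, ← halg, hcoe,
    spectrum_inter_Ioo_eq_empty_and_ker_eq_span_iff hS hψ hSψ hΔ]
  refine ⟨fun h A ↦ (hstate Δ A).mpr (h _), fun h ↦ ?_⟩
  refine forall_re_inner_apply_ge_of_dense hcyc S ψ Δ ?_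
  rintro _ ⟨A, rfl⟩
  exact (hstate Δ A).mp (h A)

/-- For a ground state `ω = ⟨ψ, π(·)ψ⟩` of a self-adjoint `H` (realized in a cyclic
representation, with ground state energy `λ⋆ = min Spec (π H)`), being a non-degenerate
gapped ground state is equivalent to the dynamical inequality
`ω (A* H A - A* A H) ≥ Δ (ω (A* A) - |ω A|²)` for some `Δ > 0` and all `A`. -/
theorem gapped_ground_state_iff {H : Type*} [NormedAddCommGroup H]
    [InnerProductSpace ℂ H] [CompleteSpace H] [Nontrivial H]
    (Hop : 𝔄) (hH : star Hop = Hop) (π : 𝔄 →⋆ₐ[ℂ] (H →L[ℂ] H)) (ψ : H) (hψ : ‖ψ‖ = 1)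
    (hcyc : Dense {x : H | ∃ A : 𝔄, x = π A ψ})
    (ω : 𝔄 → ℂ) (hω : ∀ A : 𝔄, ω A = (inner ℂ ψ (π A ψ) : ℂ))
    (lstar : ℝ) (hl₁ : ω Hop = (lstar : ℂ)) (hl₂ : lstar = sInf (spectrum ℝ (π Hop))) :
    (∃ Δ : ℝ, 0 < Δ ∧ spectrum ℝ (π Hop) ∩ Set.Ioo lstar (lstar + Δ) = ∅ ∧
        LinearMap.ker ((π Hop - (lstar : ℂ) • (1 : H →L[ℂ] H)) : H →ₗ[ℂ] H) = Submodule.span ℂ {ψ}) ↔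
      (∃ Δ : ℝ, 0 < Δ ∧ ∀ A : 𝔄, ∃ r s : ℝ,
        ω (star A * Hop * A - star A * A * Hop) = (r : ℂ) ∧
        ω (star A * A) = (s : ℂ) ∧ Δ * (s - ‖ω A‖ ^ 2) ≤ r) :=
  gapped_ground_state_iff_general Hop hH π ψ hψ hcyc ω hω lstar hl₁ hl₂
end
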